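/- Let l ≥ 2, let λ be an l-core partition, let p = nl + r with n ∈ ℤ and 0 ≤ r ≤ l−1, and let tilde p_0, …, tilde p_{l−1} be the charges of the sequences k ↦ μ_λ(lk + i − p) for 0 ≤ i ≤ l−1 (the quotient charges of the Maya diagram of λ shifted by p). Then ∑_{k∈ℤ} N_{kl−r}(λ) = (1/l)·( (l/2)·∑_{i=0}^{l−1} tilde p_i² − (l+1)p/2 − p²/2 + (l+1)ln/2 + (r+1)r/2 ). -/

import Mathlib

/-- A partition `λ = (λ_1 ≥ λ_2 ≥ ⋯)`: a non-increasing sequence of natural numbers with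
finitely many nonzero terms.  Here `parts n` denotes `λ_{n+1}`. -/
structure Partition' where
  parts : ℕ → ℕ
  antitone : ∀ ⦃m n : ℕ⦄, m ≤ n → parts n ≤ parts m
  eventually_zero : ∃ N : ℕ, ∀ n ≥ N, parts n = 0

namespace Partition'

/-- `|λ|`, the number of boxes of the Young diagram of `λ`. -/
noncomputable def size (lam : Partition') : ℕ := ∑ᶠ n, lam.parts n

/-- The Young diagram of `λ`: boxes `(m, n)` (column `m`, row `n`) with `m < λ_{n+1}`. -/
def cells (lam : Partition') : Set (ℕ × ℕ) := {c | c.1 < lam.parts c.2}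

/-- Maya diagram of `λ`: `maya lam k` holds (bead value 1) iff `k ∉ {λ_m − m : m ≥ 1}`. -/
def maya (lam : Partition') (k : ℤ) : Prop :=
  ¬ ∃ m : ℕ, k = (lam.parts m : ℤ) - ((m : ℤ) + 1)

/-- The conjugate partition's `(m+1)`-st part: `λ'_{m+1} = #{rows of length > m}`. -/
noncomputable def conjParts (lam : Partition') (m : ℕ) : ℕ :=
  {j : ℕ | m < lam.parts j}.ncard

/-- Hook length of the box `(m, n)`: `(λ_{n+1} − 1 − m) + (λ'_{m+1} − 1 − n) + 1`. -/
noncomputable def hookLength (lam : Partition') (m n : ℕ) : ℕ :=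
  (lam.parts n - 1 - m) + (lam.conjParts m - 1 - n) + 1

end Partition'

/-- `c` is the charge of the 0/1-sequence `μ`:
`#{k < c : μ k = 1} = #{k ≥ c : μ k = 0}` (both sets finite). -/
def IsCharge (μ : ℤ → Prop) (c : ℤ) : Prop :=
  {k : ℤ | k < c ∧ μ k}.Finite ∧ {k : ℤ | c ≤ k ∧ ¬ μ k}.Finite ∧
    {k : ℤ | k < c ∧ μ k}.ncard = {k : ℤ | c ≤ k ∧ ¬ μ k}.ncard

/-- The `i`-th quotient sequence of the Maya diagram of `λ`: `μ_i(k) = μ_λ(l·k + i)`. -/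
def quotSeq (l : ℕ) (lam : Partition') (i : ℕ) : ℤ → Prop :=
  fun k => lam.maya ((l : ℤ) * k + (i : ℕ))

/-- `Q` is the `l`-quotient of `λ` with quotient charges `p`: for each `i`, `p i` is the
charge of the `i`-th quotient sequence `μ_i` and `μ_{Q i}(k) = μ_i(k + p i)`. -/
def IsQuotientWith (l : ℕ) (lam : Partition') (p : Fin l → ℤ) (Q : Fin l → Partition') : Prop :=
  ∀ i : Fin l, IsCharge (quotSeq l lam i) (p i) ∧
    ∀ k : ℤ, (Q i).maya k ↔ quotSeq l lam i (k + p i)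

/-- Two boxes are adjacent if they share an edge. -/
def Adj (a b : ℕ × ℕ) : Prop :=
  (a.1 = b.1 ∧ (a.2 = b.2 + 1 ∨ b.2 = a.2 + 1)) ∨
    (a.2 = b.2 ∧ (a.1 = b.1 + 1 ∨ b.1 = a.1 + 1))

/-- A set of boxes is connected: any two of its boxes are joined by a path of
edge-adjacent boxes inside the set. -/
def ConnectedIn (H : Set (ℕ × ℕ)) : Prop :=
  ∀ x ∈ H, ∀ y ∈ H,
    Relation.ReflTransGen (fun a b => a ∈ H ∧ b ∈ H ∧ Adj a b) x y

/-- `H` contains a 2×2 square of boxes. -/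
def HasSquare (H : Set (ℕ × ℕ)) : Prop :=
  ∃ m n : ℕ, (m, n) ∈ H ∧ (m + 1, n) ∈ H ∧ (m, n + 1) ∈ H ∧ (m + 1, n + 1) ∈ H

/-- `H` is a rim hook of length `l` of `λ`: a connected set of `l` boxes of `λ`,
containing no 2×2 square, whose removal leaves the Young diagram of a partition. -/
def IsRimHook (l : ℕ) (lam : Partition') (H : Set (ℕ × ℕ)) : Prop :=
  H ⊆ lam.cells ∧ H.Finite ∧ H.ncard = l ∧ ConnectedIn H ∧ ¬ HasSquare H ∧
    ∃ mu : Partition', mu.cells = lam.cells \ H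

/-- `μ` is obtained from `λ` by removing one rim hook of length `l`. -/
def RemoveHook (l : ℕ) (lam mu : Partition') : Prop :=
  ∃ H : Set (ℕ × ℕ), IsRimHook l lam H ∧ mu.cells = lam.cells \ H

/-- `λ` is an `l`-core: it admits no rim hook of length `l`. -/
def IsLCore (l : ℕ) (lam : Partition') : Prop := ¬ ∃ H : Set (ℕ × ℕ), IsRimHook l lam H

/-- `c` is the `l`-core of `λ`: obtained from `λ` by repeatedly removing rim hooks of
length `l` until none remain. -/
def IsCoreOf (l : ℕ) (lam c : Partition') : Prop :=
  Relation.ReflTransGen (RemoveHook l) lam c ∧ IsLCore l c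

/-- Number of boxes `(m,n)` of `λ` with content `m − n ≡ r (mod l)`. -/
noncomputable def contentCount (l : ℕ) (lam : Partition') (r : ℤ) : ℕ :=
  {c : ℕ × ℕ | c ∈ lam.cells ∧ ((c.1 : ℤ) - (c.2 : ℤ)) ≡ r [ZMOD (l : ℤ)]}.ncard

/-- `N_d(λ)`: the number of boxes `(m,n)` of `λ` with content `m − n = d`. -/
noncomputable def diagCount (lam : Partition') (d : ℤ) : ℕ :=
  {c : ℕ × ℕ | c ∈ lam.cells ∧ ((c.1 : ℤ) - (c.2 : ℤ)) = d}.ncard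

/-- `K` is the blended partition of the charges `p` and the `l`-tuple of partitions `R`:
`{p + K_m − m : m ≥ 1} = {l·(R_{i,m} − m + p_i) + i : 0 ≤ i ≤ l−1, m ≥ 1}` in `ℤ`. -/
def IsBlended (l : ℕ) (p : Fin l → ℤ) (R : Fin l → Partition') (K : Partition') : Prop :=
  {k : ℤ | ∃ m : ℕ, k = (∑ i, p i) + (K.parts m : ℤ) - ((m : ℤ) + 1)} =
    {k : ℤ | ∃ i : Fin l, ∃ m : ℕ,
      k = (l : ℤ) * (((R i).parts m : ℤ) - ((m : ℤ) + 1) + p i) + (i : ℕ)}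

/-
Call the positions `λ_m - m`, where `μ_λ = 0`, beads, and let `F d` (`beadsAbove`) be the
number of beads at positions `≥ d`. Row `b` of `λ` contains the box of content `d` iff
`b < F d`, so `N_d(λ) = F d - max 0 (-d)`.

If `λ` is an `l`-core, a bead at `m + l` above a gap at `m` is impossible: moving it down would
remove the rim hook formed by the last boxes on the diagonals `m < d ≤ m + l`. Hence each
runner `k ↦ μ_λ(l k + i - p)` is a step function whose beads are exactly the `k < p̃_i`, and
counting beads runner by runner gives `F (l u - r) = ∑ i, max 0 (p̃_i - n - u)`. The empty
partition has the same description with charges `1` for `i < r` and `0` otherwise, so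
`N_{lu-r}(λ)` is a difference of two such sums, and summing over `u` turns both into sums of
triangular numbers: `2 ∑_u N_{lu-r}(λ) = ∑ i, (p̃_i - n)² - r`, with `∑ i, p̃_i = p`.
-/

namespace Partition'

def content (c : ℕ × ℕ) : ℤ := c.1 - c.2

variable (lam : Partition')

def beta (b : ℕ) : ℤ := lam.parts b - (b + 1)

lemma beta_strictAnti : StrictAnti lam.beta := fun a b hab => by
  have := lam.antitone hab.le
  unfold beta
  omega

lemma not_maya_iff {k : ℤ} : ¬ lam.maya k ↔ ∃ b, lam.beta b = k := by
  simp [maya, beta, eq_comm]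

lemma cells_finite : lam.cells.Finite := by
  obtain ⟨N, hN⟩ := lam.eventually_zero
  refine ((Set.finite_Iio (lam.parts 0)).prod (Set.finite_Iio N)).subset ?_
  rintro ⟨a, b⟩ (h : a < lam.parts b)
  have := lam.antitone (Nat.zero_le b)
  have : b < N := by
    by_contra! hb
    simp [hN b hb] at h
  simp only [Set.mem_prod, Set.mem_Iio]
  omega

noncomputable def beadsAbove (d : ℤ) : ℕ := {k : ℤ | d ≤ k ∧ ¬ lam.maya k}.ncard

lemma finite_setOf_le_beta (d : ℤ) : {b : ℕ | d ≤ lam.beta b}.Finite := by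
  refine (Set.finite_Iic (lam.parts 0 - d).toNat).subset fun b (hb : d ≤ lam.beta b) => ?_
  have := lam.antitone (Nat.zero_le b)
  simp only [beta, Set.mem_Iic] at hb ⊢
  omega

lemma setOf_bead_eq_image (d : ℤ) :
    {k : ℤ | d ≤ k ∧ ¬ lam.maya k} = lam.beta '' {b | d ≤ lam.beta b} := by
  ext k
  simp only [Set.mem_ofPred_eq, Set.mem_image, not_maya_iff]
  constructor
  · rintro ⟨hd, b, rfl⟩
    exact ⟨b, hd, rfl⟩
  · rintro ⟨b, hd, rfl⟩
    exact ⟨hd, b, rfl⟩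

lemma finite_setOf_bead (d : ℤ) : {k : ℤ | d ≤ k ∧ ¬ lam.maya k}.Finite := by
  rw [setOf_bead_eq_image]
  exact (lam.finite_setOf_le_beta d).image _

lemma lt_beadsAbove_iff {b : ℕ} {d : ℤ} : b < lam.beadsAbove d ↔ d ≤ lam.beta b := by
  rw [beadsAbove, setOf_bead_eq_image, Set.ncard_image_of_injective _ lam.beta_strictAnti.injective]
  constructor
  · intro hb
    by_contra! hd
    have hsub : {b' | d ≤ lam.beta b'} ⊆ Set.Iio b := fun b' (hb' : d ≤ _) => by
      by_contra hle
      rw [Set.mem_Iio, not_lt] at hle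
      have := lam.beta_strictAnti.antitone hle
      omega
    have := Set.ncard_le_ncard hsub
    simp only [Set.ncard_Iio_nat] at this
    omega
  · intro hd
    have hsub : Set.Iic b ⊆ {b' | d ≤ lam.beta b'} := fun b' (hb' : b' ≤ b) =>
      hd.trans (lam.beta_strictAnti.antitone hb')
    have := Set.ncard_le_ncard hsub (lam.finite_setOf_le_beta d)
    simp only [Set.ncard_Iic_nat] at this
    omega

lemma mem_cells_iff {a b : ℕ} : (a, b) ∈ lam.cells ↔ b < lam.beadsAbove (content (a, b)) := by
  rw [lt_beadsAbove_iff]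
  simp only [cells, beta, content, Set.mem_ofPred_eq]
  omega

lemma beadsAbove_of_maya {d : ℤ} (h : lam.maya d) :
    lam.beadsAbove d = lam.beadsAbove (d + 1) := by
  unfold beadsAbove
  congr 1
  ext k
  simp only [Set.mem_ofPred_eq]
  constructor
  · rintro ⟨hk, hb⟩
    exact ⟨lt_of_le_of_ne hk (by rintro rfl; exact hb h), hb⟩
  · rintro ⟨hk, hb⟩
    exact ⟨by omega, hb⟩

lemma beadsAbove_of_not_maya {d : ℤ} (h : ¬ lam.maya d) :
    lam.beadsAbove d = lam.beadsAbove (d + 1) + 1 := by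
  unfold beadsAbove
  have : {k : ℤ | d ≤ k ∧ ¬ lam.maya k} = insert d {k | d + 1 ≤ k ∧ ¬ lam.maya k} := by
    ext k
    simp only [Set.mem_insert_iff, Set.mem_ofPred_eq]
    constructor
    · rintro ⟨hk, hb⟩
      rcases hk.eq_or_lt with rfl | hk
      · exact Or.inl rfl
      · exact Or.inr ⟨hk, hb⟩
    · rintro (rfl | ⟨hk, hb⟩)
      · exact ⟨le_rfl, h⟩
      · exact ⟨by omega, hb⟩
  rw [this, Set.ncard_insert_of_notMem (by simp) (lam.finite_setOf_bead _)]

lemma toNat_neg_le_beadsAbove (d : ℤ) : (-d).toNat ≤ lam.beadsAbove d := by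
  by_contra! h
  have := (lam.lt_beadsAbove_iff (b := lam.beadsAbove d)).not.mp (lt_irrefl _)
  simp only [beta, not_le] at this
  omega

end Partition'

def IsBeadCount (G : ℤ → ℕ) : Prop := ∀ d, G (d + 1) ≤ G d ∧ G d ≤ G (d + 1) + 1

namespace IsBeadCount

variable {G : ℤ → ℕ} (hG : IsBeadCount G)
include hG

lemma antitone : Antitone G := antitone_int_of_succ_le fun d => (hG d).1

lemma monotone_add : Monotone fun d => (G d : ℤ) + d :=
  monotone_int_of_le_succ fun d => by have := (hG d).2; omega

lemma isLowerSet : IsLowerSet {c : ℕ × ℕ | c.2 < G (Partition'.content c)} := by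
  rintro ⟨a, b⟩ ⟨a', b'⟩ ⟨ha : a' ≤ a, hb : b' ≤ b⟩ (h : b < G (a - b))
  show b' < G (a' - b')
  have h1 := hG.antitone (show (a' : ℤ) - b' ≤ a - b' by omega)
  have h2 := hG.monotone_add (show (a : ℤ) - b ≤ a - b' by omega)
  simp only at h2
  omega

end IsBeadCount

lemma Partition'.isBeadCount_beadsAbove (lam : Partition') : IsBeadCount lam.beadsAbove := by
  intro d
  by_cases h : lam.maya d
  · rw [lam.beadsAbove_of_maya h]; omega
  · rw [lam.beadsAbove_of_not_maya h]; omega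

lemma Adj.symm {a b : ℕ × ℕ} (h : Adj a b) : Adj b a := by
  unfold Adj at *
  omega

lemma connectedIn_of_adj {H : Set (ℕ × ℕ)} (f : ℕ × ℕ → ℤ) (hinj : Set.InjOn f H)
    (hf : (f '' H).OrdConnected) (hadj : ∀ c ∈ H, ∀ c' ∈ H, f c' = f c + 1 → Adj c c') :
    ConnectedIn H := by
  let R := fun a b => a ∈ H ∧ b ∈ H ∧ Adj a b
  have key : ∀ k : ℕ, ∀ c ∈ H, ∀ c' ∈ H, f c' = f c + k →
      Relation.ReflTransGen R c c' ∧ Relation.ReflTransGen R c' c := by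
    intro k
    induction k with
    | zero =>
      intro c hc c' hc' h
      rw [hinj hc' hc (by simpa using h)]
      exact ⟨.refl, .refl⟩
    | succ k ih =>
      intro c hc c' hc' h
      obtain ⟨c'', hc'', hfc''⟩ : f c + k ∈ f '' H :=
        hf.out (Set.mem_image_of_mem f hc) (Set.mem_image_of_mem f hc') ⟨by omega, by omega⟩
      obtain ⟨h1, h2⟩ := ih c hc c'' hc'' hfc''
      have hA := hadj c'' hc'' c' hc' (by omega)
      exact ⟨h1.tail ⟨hc'', hc', hA⟩, h2.head ⟨hc', hc'', hA.symm⟩⟩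
  intro c hc c' hc'
  rcases le_total (f c) (f c') with h | h
  · exact (key (f c' - f c).toNat c hc c' hc' (by omega)).1
  · exact (key (f c - f c').toNat c' hc' c hc (by omega)).2

lemma Partition'.exists_cells_eq_of_isLowerSet {S : Set (ℕ × ℕ)} (hS : S.Finite)
    (hlow : IsLowerSet S) : ∃ mu : Partition', mu.cells = S := by
  -- `YoungDiagram` reads a pair as (row, column), so its column lengths are our `parts`
  let μ : YoungDiagram := ⟨hS.toFinset, by simpa using hlow⟩
  have hmem : ∀ c, c ∈ μ ↔ c ∈ S := fun c => hS.mem_toFinset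
  refine ⟨⟨μ.colLen, fun m n h => μ.colLen_anti m n h, μ.rowLen 0, fun n hn => ?_⟩, ?_⟩
  · have := (μ.mem_iff_lt_colLen (i := 0) (j := n)).symm.trans μ.mem_iff_lt_rowLen
    omega
  · ext ⟨a, b⟩
    exact μ.mem_iff_lt_colLen.symm.trans (hmem _)

namespace Partition'

variable {lam : Partition'} {x y : ℤ}

lemma one_le_beadsAbove (hy : ¬ lam.maya y) {d : ℤ} (hd : d ≤ y) : 1 ≤ lam.beadsAbove d := by
  have := lam.isBeadCount_beadsAbove.antitone hd
  have := lam.beadsAbove_of_not_maya hy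
  omega

variable (lam x y) in
/-- `c.2 + 1 = beadsAbove (content c)` says that `c` is the last box of `λ` on its diagonal. -/
def rimHook : Set (ℕ × ℕ) :=
  {c | x < content c ∧ content c ≤ y ∧ c.2 + 1 = lam.beadsAbove (content c)}

lemma rimHook_subset_cells : lam.rimHook x y ⊆ lam.cells := by
  rintro ⟨a, b⟩ ⟨-, -, h⟩
  rw [mem_cells_iff]
  omega

lemma injOn_content_rimHook : Set.InjOn content (lam.rimHook x y) := by
  rintro ⟨a, b⟩ ⟨-, -, h⟩ ⟨a', b'⟩ ⟨-, -, h'⟩ he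
  rw [he] at h
  simp only [content] at he
  ext <;> simp only <;> omega

lemma image_content_rimHook (hx : lam.maya x) (hy : ¬ lam.maya y) :
    content '' lam.rimHook x y = Set.Ioc x y := by
  refine subset_antisymm (by rintro _ ⟨c, ⟨h1, h2, -⟩, rfl⟩; exact ⟨h1, h2⟩) ?_
  rintro d ⟨hxd, hdy⟩
  have h1 := one_le_beadsAbove hy hdy
  have h2 : 1 ≤ (lam.beadsAbove d : ℤ) + d := by
    have hmono := lam.isBeadCount_beadsAbove.monotone_add (show x + 1 ≤ d by omega)
    have := lam.beadsAbove_of_maya hx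
    have := lam.toNat_neg_le_beadsAbove x
    simp only at hmono
    omega
  have hc : content ((d + lam.beadsAbove d - 1).toNat, lam.beadsAbove d - 1) = d := by
    simp only [content]
    omega
  exact ⟨_, ⟨by omega, by omega, by rw [hc]; omega⟩, hc⟩

lemma adj_of_mem_rimHook {c c' : ℕ × ℕ} (hc : c ∈ lam.rimHook x y)
    (hc' : c' ∈ lam.rimHook x y) (h : content c' = content c + 1) : Adj c c' := by
  obtain ⟨-, -, hb⟩ := hc
  obtain ⟨-, -, hb'⟩ := hc'
  rw [h] at hb'
  have := lam.isBeadCount_beadsAbove (content c)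
  simp only [content] at h
  unfold Adj
  omega

lemma not_hasSquare_rimHook : ¬ HasSquare (lam.rimHook x y) := by
  rintro ⟨m, n, ⟨-, -, h⟩, -, -, ⟨-, -, h'⟩⟩
  have : content (m + 1, n + 1) = content (m, n) := by
    simp only [content]
    push_cast
    ring
  rw [this] at h'
  omega

lemma exists_cells_eq_cells_diff_rimHook (hx : lam.maya x) (hy : ¬ lam.maya y) :
    ∃ mu : Partition', mu.cells = lam.cells \ lam.rimHook x y := by
  -- the bead counts of the Maya diagram in which the bead at `y` has moved to `x`
  let G : ℤ → ℕ := fun d =>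
    if x < d ∧ d ≤ y then lam.beadsAbove d - 1 else lam.beadsAbove d
  have hcells : lam.cells \ lam.rimHook x y = {c | c.2 < G (content c)} := by
    ext ⟨a, b⟩
    simp only [Set.mem_sdiff, mem_cells_iff, rimHook, Set.mem_ofPred_eq, G]
    split_ifs <;> omega
  have hG : IsBeadCount G := by
    intro d
    have := lam.isBeadCount_beadsAbove d
    have := fun h : d ≤ y => one_le_beadsAbove hy h
    have := fun h : d + 1 ≤ y => one_le_beadsAbove hy h
    have := fun h : d = x => lam.beadsAbove_of_maya (h ▸ hx)
    have := fun h : d = y => lam.beadsAbove_of_not_maya (h ▸ hy)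
    simp only [G]
    split_ifs <;> omega
  rw [hcells]
  exact exists_cells_eq_of_isLowerSet (hcells ▸ lam.cells_finite.sdiff) hG.isLowerSet

lemma isRimHook_rimHook (hx : lam.maya x) (hy : ¬ lam.maya y) :
    IsRimHook (y - x).toNat lam (lam.rimHook x y) := by
  have himage := image_content_rimHook hx hy
  refine ⟨rimHook_subset_cells, lam.cells_finite.subset rimHook_subset_cells, ?_,
    connectedIn_of_adj content injOn_content_rimHook (himage ▸ Set.ordConnected_Ioc)
      fun c hc c' hc' => adj_of_mem_rimHook hc hc',
    not_hasSquare_rimHook, exists_cells_eq_cells_diff_rimHook hx hy⟩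
  rw [← injOn_content_rimHook.ncard_image, himage, ← Finset.coe_Ioc, Set.ncard_coe_finset,
    Int.card_Ioc]

lemma maya_add_of_isLCore {l : ℕ} (hcore : IsLCore l lam) {m : ℤ} (h : lam.maya m) :
    lam.maya (m + l) := by
  by_contra h'
  exact hcore ⟨_, by simpa using isRimHook_rimHook h h'⟩

end Partition'

lemma IsCharge.iff_le {μ : ℤ → Prop} {c : ℤ} (hc : IsCharge μ c) (hμ : Monotone μ)
    (k : ℤ) : μ k ↔ c ≤ k := by
  obtain ⟨hfin, hfin', hcard⟩ := hc
  have hA : {k | k < c ∧ μ k} = ∅ := by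
    by_contra hne
    obtain ⟨a, ha, hμa⟩ := Set.nonempty_iff_ne_empty.mpr hne
    have hB : {k | c ≤ k ∧ ¬ μ k} = ∅ :=
      Set.eq_empty_of_forall_notMem fun b ⟨hb, hμb⟩ => hμb (hμ (by omega) hμa)
    rw [hB, Set.ncard_empty, Set.ncard_eq_zero hfin] at hcard
    exact hne hcard
  rw [hA, Set.ncard_empty, eq_comm, Set.ncard_eq_zero hfin'] at hcard
  have h := Set.eq_empty_iff_forall_notMem.mp hA k
  have h' := Set.eq_empty_iff_forall_notMem.mp hcard k
  simp only [Set.mem_ofPred_eq, not_and, not_not] at h h'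
  exact ⟨fun hk => by by_contra! hlt; exact h hlt hk, h'⟩

lemma Partition'.maya_iff_le_of_isLCore {l : ℕ} {lam : Partition'} (hcore : IsLCore l lam)
    {P t : ℤ} {i : ℕ} (ht : IsCharge (fun k => lam.maya (l * k + i - P)) t) (k : ℤ) :
    lam.maya (l * k + i - P) ↔ t ≤ k := by
  refine ht.iff_le (monotone_int_of_le_succ fun k h => ?_) k
  convert lam.maya_add_of_isLCore hcore h using 2
  ring

namespace Partition'

variable (lam : Partition')

lemma diagCount_eq_beadsAbove_sub (d : ℤ) :
    (diagCount lam d : ℤ) = lam.beadsAbove d - (-d).toNat := by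
  have hset : {c : ℕ × ℕ | c ∈ lam.cells ∧ (c.1 : ℤ) - c.2 = d} =
      (fun b : ℕ => ((d + b).toNat, b)) '' Set.Ico (-d).toNat (lam.beadsAbove d) := by
    ext ⟨a, b⟩
    simp only [Set.mem_ofPred_eq, Set.mem_image, Set.mem_Ico, Prod.mk.injEq, mem_cells_iff,
      content]
    constructor
    · rintro ⟨h, rfl⟩
      exact ⟨b, ⟨by omega, h⟩, by omega, rfl⟩
    · rintro ⟨b, ⟨h1, h2⟩, rfl, rfl⟩
      have hd : ((d + b).toNat : ℤ) - b = d := by omega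
      rw [hd]
      exact ⟨h2, rfl⟩
  rw [diagCount, hset, Set.ncard_image_of_injective _ fun b b' h => (Prod.mk.inj h).2,
    Set.ncard_Ico_nat]
  have := lam.toNat_neg_le_beadsAbove d
  omega

variable {lam} in
lemma diagCount_eq_zero_of_lt {N : ℕ} (hN : ∀ n ≥ N, lam.parts n = 0) {d : ℤ}
    (hd : d < -N) : diagCount lam d = 0 := by
  rw [diagCount, Set.ncard_eq_zero (lam.cells_finite.subset fun c hc => hc.1)]
  refine Set.eq_empty_of_forall_notMem fun ⟨a, b⟩ ⟨(h : a < lam.parts b), hab⟩ => ?_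
  rw [hN b (by simp only at hab; omega)] at h
  omega

lemma contentCount_neg_eq_sum_diagCount {l : ℕ} (hl : 0 < l) (r : ℤ) (U : Finset ℤ)
    (hU : ∀ u ∉ U, diagCount lam (l * u - r) = 0) :
    contentCount l lam (-r) = ∑ u ∈ U, diagCount lam (l * u - r) := by
  let D : ℤ → Set (ℕ × ℕ) := fun d => {c | c ∈ lam.cells ∧ (c.1 : ℤ) - c.2 = d}
  have hD : ∀ d, (D d).Finite := fun d => lam.cells_finite.subset fun c hc => hc.1
  have hset : {c : ℕ × ℕ | c ∈ lam.cells ∧ (c.1 : ℤ) - c.2 ≡ -r [ZMOD l]} =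
      ⋃ u ∈ (U : Set ℤ), D (l * u - r) := by
    ext c
    simp only [Set.mem_ofPred_eq, Set.mem_iUnion, Finset.mem_coe, exists_prop, D,
      Int.modEq_iff_dvd]
    constructor
    · rintro ⟨hc, k, hk⟩
      have hu : (c.1 : ℤ) - c.2 = l * -k - r := by linarith
      by_contra! hne
      have hk' := hU (-k) fun hk => hne _ hk hc hu
      rw [diagCount, Set.ncard_eq_zero (hD _)] at hk'
      exact Set.eq_empty_iff_forall_notMem.mp hk' c ⟨hc, hu⟩
    · rintro ⟨u, -, hc, hu⟩
      exact ⟨hc, -u, by rw [hu]; ring⟩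
  have hdisj : (U : Set ℤ).PairwiseDisjoint fun u => D (l * u - r) := by
    intro u _ u' _ hne
    refine Set.disjoint_left.mpr fun c ⟨_, h⟩ ⟨_, h'⟩ => hne ?_
    exact mul_left_cancel₀ (by positivity : (l : ℤ) ≠ 0) (by linarith)
  rw [contentCount, hset, Set.Finite.ncard_biUnion U.finite_toSet (fun u _ => hD _) hdisj,
    finsum_mem_coe_finset]
  rfl

end Partition'

lemma exists_eq_mul_add_fin {l : ℕ} (hl : 0 < l) (k : ℤ) :
    ∃ (i : Fin l) (s : ℤ), k = l * s + i :=
  have : NeZero l := ⟨hl.ne'⟩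
  ⟨(Int.divModEquiv l k).2, (Int.divModEquiv l k).1, by
    have := (Int.divModEquiv l).symm_apply_apply k
    rw [Int.divModEquiv_symm_apply] at this
    linarith⟩

lemma eq_of_mul_add_fin_eq {l : ℕ} {i i' : Fin l} {s s' : ℤ}
    (h : (l : ℤ) * s + i = l * s' + i') : i = i' ∧ s = s' := by
  have : NeZero l := ⟨by rintro rfl; exact i.elim0⟩
  have := (Int.divModEquiv l).symm.injective
    (a₁ := (s, i)) (a₂ := (s', i')) (by simp only [Int.divModEquiv_symm_apply]; linarith)
  simp only [Prod.mk.injEq] at this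
  exact this.symm

lemma ncard_setOf_not_eq_sum_toNat {l : ℕ} (hl : 0 < l) {μ : ℤ → Prop} {a : ℤ}
    {q : Fin l → ℤ} (hμ : ∀ (i : Fin l) (k : ℤ), μ (l * k + i - a) ↔ q i ≤ k)
    (u : ℤ) :
    {k : ℤ | l * u - a ≤ k ∧ ¬ μ k}.ncard = ∑ i, (q i - u).toNat := by
  let g : (Σ _ : Fin l, ℤ) → ℤ := fun p => l * p.2 + p.1 - a
  have hg : Function.Injective g := by
    rintro ⟨i, s⟩ ⟨i', s'⟩ h
    simp only [g, sub_left_inj] at h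
    obtain ⟨rfl, rfl⟩ := eq_of_mul_add_fin_eq h
    rfl
  have hset : {k : ℤ | l * u - a ≤ k ∧ ¬ μ k} =
      g '' ↑(Finset.univ.sigma fun i => Finset.Ico u (q i)) := by
    ext k
    simp only [Set.mem_ofPred_eq, Set.mem_image, Finset.coe_sigma, Set.mem_sigma_iff,
      Finset.coe_univ, Set.mem_univ, Finset.coe_Ico, Set.mem_Ico, true_and, Sigma.exists, g]
    constructor
    · rintro ⟨hk, hμk⟩
      obtain ⟨i, s, hs⟩ := exists_eq_mul_add_fin hl (k + a)
      have hi : ((i : ℕ) : ℤ) < l := by exact_mod_cast i.isLt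
      have hlt : (l : ℤ) * u < l * (s + 1) := by linarith
      refine ⟨i, s, ⟨by nlinarith, ?_⟩, by linarith⟩
      rw [← not_le, ← hμ]
      convert hμk using 2
      linarith
    · rintro ⟨i, s, ⟨hus, hsq⟩, rfl⟩
      refine ⟨by nlinarith, ?_⟩
      rw [hμ]
      exact not_le.mpr hsq
  rw [hset, Set.ncard_image_of_injective _ hg, Set.ncard_coe_finset, Finset.card_sigma]
  simp only [Int.card_Ico]

section PosPartSum

variable {ι : Type*} [Fintype ι]

def posPartSum (q : ι → ℤ) (u : ℤ) : ℤ := ∑ i, ((q i - u).toNat : ℤ)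

lemma posPartSum_of_le {q : ι → ℤ} {u : ℤ} (h : ∀ i, u ≤ q i) :
    posPartSum q u = ∑ i, q i - Fintype.card ι * u := by
  rw [posPartSum, Finset.sum_congr rfl fun i _ => Int.toNat_of_nonneg (sub_nonneg.mpr (h i)),
    Finset.sum_sub_distrib, Finset.sum_const, Finset.card_univ, nsmul_eq_mul]

lemma posPartSum_of_ge {q : ι → ℤ} {u : ℤ} (h : ∀ i, q i ≤ u) : posPartSum q u = 0 :=
  Finset.sum_eq_zero fun i _ => by have := h i; omega

lemma two_mul_sum_Ico_toNat_sub {q A B : ℤ} (hA : A ≤ q) (hB : q ≤ B) :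
    2 * ∑ u ∈ Finset.Ico A B, ((q - u).toNat : ℤ) = (q - A) * (q - A + 1) := by
  induction A, hA using Int.leInductionDown with
  | base =>
    rw [Finset.sum_eq_zero fun u hu => by rw [Finset.mem_Ico] at hu; omega]
    ring
  | pred A hA ih =>
    rw [← Finset.insert_Ico_left_eq_Ico_sub_one (by omega), Finset.sum_insert (by simp),
      mul_add, ih]
    have : ((q - (A - 1)).toNat : ℤ) = q - A + 1 := by omega
    rw [this]
    ring

lemma two_mul_sum_Ico_posPartSum {q : ι → ℤ} {A B : ℤ} (hA : ∀ i, A ≤ q i)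
    (hB : ∀ i, q i ≤ B) :
    2 * ∑ u ∈ Finset.Ico A B, posPartSum q u = ∑ i, (q i - A) * (q i - A + 1) := by
  unfold posPartSum
  rw [Finset.sum_comm, Finset.mul_sum]
  exact Finset.sum_congr rfl fun i _ => two_mul_sum_Ico_toNat_sub (hA i) (hB i)

lemma exists_two_mul_sum_posPartSum_sub {q c : ι → ℤ} (hsum : ∑ i, q i = ∑ i, c i) :
    ∃ U : Finset ℤ, (∀ u ∉ U, posPartSum q u = posPartSum c u) ∧
      2 * ∑ u ∈ U, (posPartSum q u - posPartSum c u) =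
        ∑ i, (q i * (q i + 1) - c i * (c i + 1)) := by
  obtain ⟨A, hA⟩ := (Set.finite_range fun i => min (q i) (c i)).bddBelow
  obtain ⟨B, hB⟩ := (Set.finite_range fun i => max (q i) (c i)).bddAbove
  have hqA i : A ≤ q i := (hA ⟨i, rfl⟩).trans (min_le_left _ _)
  have hcA i : A ≤ c i := (hA ⟨i, rfl⟩).trans (min_le_right _ _)
  have hqB i : q i ≤ B := (le_max_left _ _).trans (hB ⟨i, rfl⟩)
  have hcB i : c i ≤ B := (le_max_right _ _).trans (hB ⟨i, rfl⟩)
  refine ⟨Finset.Ico A B, fun u hu => ?_, ?_⟩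
  · rw [Finset.mem_Ico, not_and_or, not_le, not_lt] at hu
    rcases hu with hu | hu
    · rw [posPartSum_of_le fun i => hu.le.trans (hqA i),
        posPartSum_of_le fun i => hu.le.trans (hcA i), hsum]
    · rw [posPartSum_of_ge fun i => (hqB i).trans hu, posPartSum_of_ge fun i => (hcB i).trans hu]
  · rw [Finset.sum_sub_distrib, mul_sub, two_mul_sum_Ico_posPartSum hqA hqB,
      two_mul_sum_Ico_posPartSum hcA hcB, ← Finset.sum_sub_distrib]
    have hterm i : (q i - A) * (q i - A + 1) - (c i - A) * (c i - A + 1) =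
        q i * (q i + 1) - c i * (c i + 1) - 2 * A * (q i - c i) := by ring
    have hdiff : ∑ i, (q i - c i) = 0 := by rw [Finset.sum_sub_distrib, hsum, sub_self]
    rw [Finset.sum_congr rfl fun i _ => hterm i, Finset.sum_sub_distrib, ← Finset.mul_sum, hdiff,
      mul_zero, sub_zero]

end PosPartSum

/-- The runner charges of the empty partition (beads exactly at the negative integers) read on an
`l`-abacus shifted by `r`: position `l * k + i - r` is a bead iff `k < emptyCharges l r i`. -/
def emptyCharges (l r : ℕ) (i : Fin l) : ℤ := if (i : ℕ) < r then 1 else 0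

lemma emptyCharges_nonneg (l r : ℕ) (i : Fin l) : 0 ≤ emptyCharges l r i := by
  unfold emptyCharges
  split_ifs <;> omega

lemma emptyCharges_le_one (l r : ℕ) (i : Fin l) : emptyCharges l r i ≤ 1 := by
  unfold emptyCharges
  split_ifs <;> omega

lemma posPartSum_emptyCharges {l r : ℕ} (hr : r < l) (u : ℤ) :
    posPartSum (emptyCharges l r) u = ((r : ℤ) - l * u).toNat := by
  rcases le_or_gt u 0 with hu | hu
  · rw [posPartSum_of_le fun i => hu.trans (emptyCharges_nonneg l r i), Fintype.card_fin]
    unfold emptyCharges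
    rw [Fin.sum_univ_eq_sum_range (fun i => if i < r then (1 : ℤ) else 0), Finset.sum_boole,
      show {i ∈ Finset.range l | i < r} = Finset.range r by ext; simp; omega, Finset.card_range]
    have : (l : ℤ) * u ≤ 0 := mul_nonpos_of_nonneg_of_nonpos (by positivity) hu
    omega
  · rw [posPartSum_of_ge fun i => (emptyCharges_le_one l r i).trans hu]
    have : (l : ℤ) ≤ l * u := le_mul_of_one_le_right (by positivity) hu
    omega

lemma sum_emptyCharges {l r : ℕ} (hr : r < l) : ∑ i, emptyCharges l r i = r := by
  have := posPartSum_emptyCharges hr 0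
  rwa [posPartSum_of_le (emptyCharges_nonneg l r), mul_zero, sub_zero, mul_zero, sub_zero,
    Int.toNat_natCast] at this

lemma sum_emptyCharges_mul_add_one {l r : ℕ} (hr : r < l) :
    ∑ i, emptyCharges l r i * (emptyCharges l r i + 1) = 2 * r := by
  rw [← sum_emptyCharges hr, Finset.mul_sum]
  refine Finset.sum_congr rfl fun i _ => ?_
  unfold emptyCharges
  split_ifs <;> norm_num

namespace Partition'

variable {l r : ℕ} {lam : Partition'} {q : Fin l → ℤ}

lemma diagCount_eq_posPartSum_sub (hr : r < l)
    (hq : ∀ (i : Fin l) (k : ℤ), lam.maya (l * k + i - r) ↔ q i ≤ k) (u : ℤ) :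
    (diagCount lam (l * u - r) : ℤ) = posPartSum q u - posPartSum (emptyCharges l r) u := by
  rw [diagCount_eq_beadsAbove_sub, beadsAbove, ncard_setOf_not_eq_sum_toNat (by omega) hq,
    neg_sub, posPartSum_emptyCharges hr, posPartSum, Nat.cast_sum]

lemma sum_eq_of_runners (hr : r < l)
    (hq : ∀ (i : Fin l) (k : ℤ), lam.maya (l * k + i - r) ↔ q i ≤ k) : ∑ i, q i = r := by
  obtain ⟨N, hN⟩ := lam.eventually_zero
  obtain ⟨A, hA⟩ := (Set.finite_range q).bddBelow
  set u := min A (-N - 1)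
  have hlu : (l : ℤ) * u ≤ u := by
    nlinarith [show (1 : ℤ) ≤ l by omega, show u ≤ 0 by omega]
  have h := diagCount_eq_posPartSum_sub hr hq u
  rw [diagCount_eq_zero_of_lt hN (by omega), posPartSum_of_le fun i => (min_le_left _ _).trans
    (hA ⟨i, rfl⟩), posPartSum_of_le fun i => (min_le_right _ _).trans (by
      have := emptyCharges_nonneg l r i; omega), sum_emptyCharges hr] at h
  push_cast at h
  linarith

theorem two_mul_contentCount_of_runners (hr : r < l)
    (hq : ∀ (i : Fin l) (k : ℤ), lam.maya (l * k + i - r) ↔ q i ≤ k) :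
    2 * (contentCount l lam (-r) : ℤ) = ∑ i, q i ^ 2 - r := by
  have hsum := sum_eq_of_runners hr hq
  obtain ⟨U, hU, hsumU⟩ :=
    exists_two_mul_sum_posPartSum_sub (hsum.trans (sum_emptyCharges hr).symm)
  have hl : 0 < l := by omega
  have hcount := lam.contentCount_neg_eq_sum_diagCount hl r U fun u hu => by
    have := diagCount_eq_posPartSum_sub hr hq u
    rw [hU u hu, sub_self] at this
    exact_mod_cast this
  rw [hcount, Nat.cast_sum, Finset.sum_congr rfl fun u _ => diagCount_eq_posPartSum_sub hr hq u,
    hsumU, Finset.sum_sub_distrib, sum_emptyCharges_mul_add_one hr]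
  simp only [mul_add_one, Finset.sum_add_distrib, hsum, sq]
  ring

end Partition'

theorem lcore_shifted_content_formula_general (l : ℕ) (lam : Partition')
    (hcore : IsLCore l lam) (n : ℤ) (r : ℕ) (hr : r < l) (P : ℤ) (hP : P = n * l + r)
    (tp : Fin l → ℤ)
    (htp : ∀ i : Fin l, IsCharge (fun k => lam.maya ((l : ℤ) * k + (i : ℕ) - P)) (tp i)) :
    (contentCount l lam (-(r : ℤ)) : ℚ) =
      (1 / (l : ℚ)) * (((l : ℚ) / 2) * ∑ i, (tp i : ℚ) ^ 2
        - (((l : ℚ) + 1) * (P : ℚ)) / 2 - (P : ℚ) ^ 2 / 2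
        + (((l : ℚ) + 1) * (l : ℚ) * (n : ℚ)) / 2 + (((r : ℚ) + 1) * (r : ℚ)) / 2) := by
  have hrunner : ∀ (i : Fin l) (k : ℤ), lam.maya (l * k + i - r) ↔ tp i - n ≤ k := by
    intro i k
    have := Partition'.maya_iff_le_of_isLCore hcore (htp i) (k + n)
    rw [hP, show (l : ℤ) * (k + n) + i - (n * l + r) = l * k + i - r by ring] at this
    rw [this]
    omega
  have hsum : ∑ i, ((tp i : ℚ) - n) = r := by
    exact_mod_cast Partition'.sum_eq_of_runners hr hrunner
  have hcount : 2 * (contentCount l lam (-r) : ℚ) = ∑ i, ((tp i : ℚ) - n) ^ 2 - r := by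
    exact_mod_cast Partition'.two_mul_contentCount_of_runners hr hrunner
  have hsq : ∑ i, (tp i : ℚ) ^ 2 =
      ∑ i, (((tp i : ℚ) - n) ^ 2 + 2 * n * ((tp i : ℚ) - n) + n ^ 2) :=
    Finset.sum_congr rfl fun i _ => by ring
  rw [Finset.sum_add_distrib, Finset.sum_add_distrib, ← Finset.mul_sum, hsum, Finset.sum_const,
    Finset.card_univ, Fintype.card_fin, nsmul_eq_mul] at hsq
  have hl : (l : ℚ) ≠ 0 := by exact_mod_cast (show l ≠ 0 by omega)
  subst hP
  push_cast
  field_simp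
  linear_combination (l : ℚ) * hcount - (l : ℚ) * hsq

/-- Let `l ≥ 2`, let `λ` be an `l`-core, let `p = nl + r` with
`0 ≤ r ≤ l−1`, and let `p̃_i` be the charges of the sequences `k ↦ μ_λ(lk + i − p)` (the
quotient charges of the Maya diagram of `λ` shifted by `p`). Then
`∑_{k∈ℤ} N_{kl−r}(λ) = (1/l)·((l/2)·∑_i p̃_i² − (l+1)p/2 − p²/2 + (l+1)ln/2 + (r+1)r/2)`,
where the left-hand side is the number of boxes of `λ` of content `≡ −r (mod l)`. -/
theorem lcore_shifted_content_formula (l : ℕ) (hl : 2 ≤ l) (lam : Partition')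
    (hcore : IsLCore l lam) (n : ℤ) (r : ℕ) (hr : r < l) (P : ℤ) (hP : P = n * l + r)
    (tp : Fin l → ℤ)
    (htp : ∀ i : Fin l, IsCharge (fun k => lam.maya ((l : ℤ) * k + (i : ℕ) - P)) (tp i)) :
    (contentCount l lam (-(r : ℤ)) : ℚ) =
      (1 / (l : ℚ)) * (((l : ℚ) / 2) * ∑ i, (tp i : ℚ) ^ 2
        - (((l : ℚ) + 1) * (P : ℚ)) / 2 - (P : ℚ) ^ 2 / 2
        + (((l : ℚ) + 1) * (l : ℚ) * (n : ℚ)) / 2 + (((r : ℚ) + 1) * (r : ℚ)) / 2) :=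
  lcore_shifted_content_formula_general l lam hcore n r hr P hP tp htp
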